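/- Let f, g ∈ L^1_+(ℝ^d) be probability densities with f log f ∈ L^1 and g log g ∈ L^1. If C_f(α) ≤ C_g(α) for all α ≥ 0 and ∫ f = ∫ g, then H(f) ≥ H(g), where H(f) := −∫ f log f dx. -/

import Mathlib

open MeasureTheory Set Metric ENNReal

noncomputable section

abbrev Rd (d : ℕ) := EuclideanSpace ℝ (Fin d)

/-- Modulus of absolute continuity of a density. -/
def Cfun {d : ℕ} (f : Rd d → ℝ) (α : ℝ) : ℝ :=
  sSup {r | ∃ E : Set (Rd d), MeasurableSet E ∧ volume E = ENNReal.ofReal α ∧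
      r = ∫ x in E, f x}

section Aux

lemma aux_log_add_le (t : ℝ) (ht : 0 ≤ t) : Real.log (t + 1) ≤ |Real.log t| + 1 := by
  rcases le_or_gt 1 t with h | h
  · have h2 : Real.log (t + 1) ≤ Real.log (2 * t) :=
      Real.log_le_log (by linarith) (by linarith)
    have h3 : Real.log (2 * t) = Real.log 2 + Real.log t :=
      Real.log_mul (by norm_num) (by linarith)
    have h4 : Real.log 2 ≤ 1 := by
      have := Real.log_le_sub_one_of_pos (by norm_num : (0:ℝ) < 2); linarith
    have h5 : Real.log t ≤ |Real.log t| := le_abs_self _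
    linarith
  · have h2 : Real.log (t + 1) ≤ Real.log 2 := Real.log_le_log (by linarith) (by linarith)
    have h4 : Real.log 2 ≤ 1 := by
      have := Real.log_le_sub_one_of_pos (by norm_num : (0:ℝ) < 2); linarith
    have : (0:ℝ) ≤ |Real.log t| := abs_nonneg _
    linarith

lemma Feps_lb (ε t : ℝ) (hε : 0 < ε) (ht : 0 ≤ t) :
    t * Real.log t ≤ (t + ε) * Real.log (t + ε) - ε * Real.log ε := by
  have h1 : Real.log ε ≤ Real.log (t + ε) := Real.log_le_log hε (by linarith)
  have h2 : t * Real.log t ≤ t * Real.log (t + ε) := by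
    rcases eq_or_lt_of_le ht with h | h
    · simp [← h]
    · exact mul_le_mul_of_nonneg_left (Real.log_le_log h (by linarith)) ht
  nlinarith

lemma Feps_ub (ε t : ℝ) (hε : 0 < ε) (hε1 : ε ≤ 1) (ht : 0 ≤ t) :
    (t + ε) * Real.log (t + ε) - ε * Real.log ε ≤ t * |Real.log t| + 2 * t := by
  have hlog : Real.log (t + ε) - Real.log ε ≤ t / ε := by
    have h1 : Real.log ((t + ε) / ε) ≤ (t + ε) / ε - 1 :=
      Real.log_le_sub_one_of_pos (by positivity)
    have h2 : Real.log ((t + ε) / ε) = Real.log (t + ε) - Real.log ε :=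
      Real.log_div (by positivity) (ne_of_gt hε)
    have h3 : (t + ε) / ε - 1 = t / ε := by field_simp; ring
    linarith
  have hεterm : ε * (Real.log (t + ε) - Real.log ε) ≤ t := by
    have := mul_le_mul_of_nonneg_left hlog hε.le
    rwa [mul_div_cancel₀ _ (ne_of_gt hε)] at this
  have htterm : t * Real.log (t + ε) ≤ t * (|Real.log t| + 1) := by
    apply mul_le_mul_of_nonneg_left _ ht
    calc Real.log (t + ε) ≤ Real.log (t + 1) := Real.log_le_log (by linarith) (by linarith)
    _ ≤ |Real.log t| + 1 := aux_log_add_le t ht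
  nlinarith

lemma Feps_abs (ε t : ℝ) (hε : 0 < ε) (hε1 : ε ≤ 1) (ht : 0 ≤ t) :
    |(t + ε) * Real.log (t + ε) - ε * Real.log ε| ≤ t * |Real.log t| + 2 * t := by
  rw [abs_le]
  constructor
  · have h1 := Feps_lb ε t hε ht
    have h2 : -(t * |Real.log t|) ≤ t * Real.log t := by
      have := neg_abs_le (Real.log t)
      nlinarith [mul_le_mul_of_nonneg_left this ht]
    linarith
  · exact Feps_ub ε t hε hε1 ht

lemma J_nonneg (ε t : ℝ) (hε : 0 < ε) (ht : 0 ≤ t) :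
    0 ≤ (t + ε) * (Real.log (t + ε) - Real.log ε) - t := by
  have h1 : Real.log (ε / (t + ε)) ≤ ε / (t + ε) - 1 :=
    Real.log_le_sub_one_of_pos (by positivity)
  have h2 : Real.log (ε / (t + ε)) = Real.log ε - Real.log (t + ε) :=
    Real.log_div (ne_of_gt hε) (by positivity)
  have h3 : (t + ε) * (ε / (t + ε)) = ε := by field_simp
  nlinarith [mul_le_mul_of_nonneg_left (h2 ▸ h1) (by positivity : (0:ℝ) ≤ t + ε)]

lemma ftc_layer (ε t : ℝ) (hε : 0 < ε) (ht : 0 ≤ t) :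
    ∫ s in (0:ℝ)..t, (t - s) / (s + ε)
      = (t + ε) * (Real.log (t + ε) - Real.log ε) - t := by
  set φ : ℝ → ℝ := fun s => (t + ε) * Real.log (s + ε) - s with hφ
  have key : ∫ s in (0:ℝ)..t, (t - s) / (s + ε) = φ t - φ 0 := by
    apply intervalIntegral.integral_eq_sub_of_hasDerivAt
    · intro s hs
      rw [uIcc_of_le ht] at hs
      have hpos : 0 < s + ε := by have := hs.1; linarith
      have hd : HasDerivAt (fun u : ℝ => u + ε) 1 s := (hasDerivAt_id s).add_const ε
      have hlog : HasDerivAt (fun u : ℝ => Real.log (u + ε)) (1 / (s + ε)) s := by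
        simpa using hd.log (ne_of_gt hpos)
      have := (hlog.const_mul (t + ε)).sub (hasDerivAt_id s)
      convert this using 1
      · rfl
      · field_simp
        ring
    · apply ContinuousOn.intervalIntegrable
      apply ContinuousOn.div (continuousOn_const.sub continuousOn_id)
        (continuousOn_id.add continuousOn_const)
      intro s hs
      rw [uIcc_of_le ht] at hs
      have := hs.1; exact ne_of_gt (show 0 < s + ε by linarith)
  rw [key, hφ]
  simp only [zero_add]
  ring_nf

lemma layer_lintegral (ε t : ℝ) (hε : 0 < ε) (ht : 0 ≤ t) :
    ∫⁻ s in Ioi (0:ℝ), ENNReal.ofReal (t - s) / ENNReal.ofReal (s + ε)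
      = ENNReal.ofReal ((t + ε) * (Real.log (t + ε) - Real.log ε) - t) := by
  have hsplit : Ioi (0:ℝ) = Ioc 0 t ∪ Ioi t := (Ioc_union_Ioi_eq_Ioi ht).symm
  rw [hsplit, lintegral_union measurableSet_Ioi (Ioc_disjoint_Ioi le_rfl)]
  have h2 : ∫⁻ s in Ioi t, ENNReal.ofReal (t - s) / ENNReal.ofReal (s + ε) = 0 := by
    rw [setLIntegral_congr_fun measurableSet_Ioi
      (fun s (hs : t < s) => by
        rw [ENNReal.ofReal_eq_zero.2 (by linarith), ENNReal.zero_div])]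
    simp
  have h1 : ∫⁻ s in Ioc 0 t, ENNReal.ofReal (t - s) / ENNReal.ofReal (s + ε)
      = ∫⁻ s in Ioc 0 t, ENNReal.ofReal ((t - s) / (s + ε)) := by
    apply setLIntegral_congr_fun measurableSet_Ioc
    exact fun s hs => (ENNReal.ofReal_div_of_pos (by have := hs.1; linarith)).symm
  have hcont : ContinuousOn (fun s : ℝ => (t - s) / (s + ε)) (Icc 0 t) := by
    apply ContinuousOn.div (continuousOn_const.sub continuousOn_id)
      (continuousOn_id.add continuousOn_const)
    intro s hs; have := hs.1; exact ne_of_gt (show 0 < s + ε by linarith)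
  have hint : IntegrableOn (fun s : ℝ => (t - s) / (s + ε)) (Ioc 0 t) :=
    (hcont.integrableOn_Icc).mono_set Ioc_subset_Icc_self
  have h3 : ∫⁻ s in Ioc 0 t, ENNReal.ofReal ((t - s) / (s + ε))
      = ENNReal.ofReal (∫ s in Ioc 0 t, (t - s) / (s + ε)) := by
    rw [ofReal_integral_eq_lintegral_ofReal hint]
    exact (ae_restrict_iff' measurableSet_Ioc).2 (ae_of_all _ fun s hs => by
      have h01 := hs.1; have h02 := hs.2
      apply div_nonneg <;> linarith)
  rw [h1, h2, h3, ← intervalIntegral.integral_of_le ht, ftc_layer ε t hε ht, add_zero]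

lemma integrable_max_sub {d : ℕ} {g : Rd d → ℝ} (hg : Integrable g)
    (hg0 : ∀ x, 0 ≤ g x) {s : ℝ} (hs : 0 ≤ s) :
    Integrable (fun x => max (g x - s) 0) := by
  refine hg.mono' ((hg.1.sub aestronglyMeasurable_const).sup aestronglyMeasurable_const)
    (ae_of_all _ fun x => ?_)
  rw [Real.norm_eq_abs, abs_of_nonneg (le_max_right _ _)]
  exact max_le (by have := hg0 x; linarith) (hg0 x)

lemma keyA {d : ℕ} (f g : Rd d → ℝ)
    (hf : Integrable f) (hg : Integrable g)
    (hf0 : ∀ x, 0 ≤ f x) (hg0 : ∀ x, 0 ≤ g x)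
    (hC : ∀ α : ℝ, 0 ≤ α → Cfun f α ≤ Cfun g α)
    {s : ℝ} (hs : 0 < s) :
    ∫ x, max (f x - s) 0 ≤ ∫ x, max (g x - s) 0 := by
  classical
  set f' : Rd d → ℝ := fun x => max (hf.1.mk f x) 0 with hf'def
  have hf'meas : Measurable f' := hf.1.measurable_mk.max measurable_const
  have hff' : f =ᵐ[volume] f' := by
    filter_upwards [hf.1.ae_eq_mk] with x hx
    rw [hf'def]
    simp only [← hx]
    exact (max_eq_left (hf0 x)).symm
  have hf'int : Integrable f' := hf.congr hff'
  set E : Set (Rd d) := {x | s < f' x} with hEdef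
  have hEmeas : MeasurableSet E := measurableSet_lt measurable_const hf'meas
  have hEfin : volume E < ⊤ :=
    lt_of_le_of_lt (measure_mono (fun x (hx : s < f' x) => hx.le))
      (hf'int.measure_ge_lt_top hs)
  set α : ℝ := (volume E).toReal with hαdef
  have hα0 : 0 ≤ α := ENNReal.toReal_nonneg
  have hvol : volume E = ENNReal.ofReal α := (ENNReal.ofReal_toReal hEfin.ne).symm
  have hmaxf_int := integrable_max_sub hf hf0 hs.le
  have hmaxg_int := integrable_max_sub hg hg0 hs.le
  have step1 : ∫ x, max (f x - s) 0 = (∫ x in E, f x) - s * α := by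
    have h1 : ∫ x, max (f x - s) 0 = ∫ x, max (f' x - s) 0 :=
      integral_congr_ae (hff'.mono fun x hx => by dsimp only; rw [hx])
    have h2 : (fun x => max (f' x - s) 0) = E.indicator (fun x => f' x - s) := by
      funext x
      by_cases hx : s < f' x
      · rw [Set.indicator_of_mem (show x ∈ E from hx), max_eq_left (by linarith)]
      · rw [Set.indicator_of_notMem (show x ∉ E from hx),
          max_eq_right (by push_neg at hx; linarith)]
    have h3 : ∫ x in E, (f' x - s) = (∫ x in E, f' x) - ∫ x in E, s :=
      integral_sub hf'int.integrableOn (integrableOn_const hEfin.ne)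
    have h4 : ∫ x in E, f' x = ∫ x in E, f x :=
      integral_congr_ae (ae_restrict_of_ae hff'.symm)
    rw [h1, h2, integral_indicator hEmeas, h3, h4, setIntegral_const, measureReal_def, ← hαdef, smul_eq_mul]
    ring
  have step2 : (∫ x in E, f x) ≤ Cfun f α := by
    have hbdd : BddAbove {r | ∃ E : Set (Rd d), MeasurableSet E ∧
        volume E = ENNReal.ofReal α ∧ r = ∫ x in E, f x} := by
      refine ⟨∫ x, f x, fun r hr => ?_⟩
      obtain ⟨E', hE'm, hE'v, rfl⟩ := hr
      exact setIntegral_le_integral hf (ae_of_all _ hf0)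
    exact le_csSup hbdd ⟨E, hEmeas, hvol, rfl⟩
  have step3 : Cfun g α ≤ (∫ x, max (g x - s) 0) + s * α := by
    apply Real.sSup_le
    · rintro r ⟨E', hE'm, hE'v, rfl⟩
      have hE'fin : volume E' < ⊤ := by rw [hE'v]; exact ofReal_lt_top
      have htr : (volume E').toReal = α := by rw [hE'v, ENNReal.toReal_ofReal hα0]
      have hgon : IntegrableOn g E' := hg.integrableOn
      have hconst : IntegrableOn (fun _ => s) E' volume :=
        integrableOn_const hE'fin.ne
      have e1 : ∫ x in E', g x = (∫ x in E', (g x - s)) + s * α := by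
        rw [integral_sub hgon hconst, setIntegral_const, measureReal_def, htr, smul_eq_mul]
        ring
      have h4 : ∫ x in E', (g x - s) ≤ ∫ x in E', max (g x - s) 0 :=
        integral_mono (hgon.sub hconst) hmaxg_int.integrableOn fun x => le_max_left _ _
      have h5 : ∫ x in E', max (g x - s) 0 ≤ ∫ x, max (g x - s) 0 :=
        setIntegral_le_integral hmaxg_int (ae_of_all _ fun x => le_max_right _ _)
      linarith
    · exact add_nonneg (integral_nonneg fun x => le_max_right _ _)
        (mul_nonneg hs.le hα0)
  have := hC α hα0
  linarith

lemma lint_max {d : ℕ} {f : Rd d → ℝ} (hf : Integrable f) (hf0 : ∀ x, 0 ≤ f x)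
    {s : ℝ} (hs : 0 ≤ s) :
    ∫⁻ x, ENNReal.ofReal (f x - s) = ENNReal.ofReal (∫ x, max (f x - s) 0) := by
  rw [ofReal_integral_eq_lintegral_ofReal (integrable_max_sub hf hf0 hs)
    (ae_of_all _ fun x => le_max_right _ _)]
  refine lintegral_congr fun x => ?_
  rcases le_total (f x - s) 0 with h | h
  · rw [max_eq_right h, ENNReal.ofReal_eq_zero.2 h, ENNReal.ofReal_zero]
  · rw [max_eq_left h]

lemma ton_repr {d : ℕ} (f : Rd d → ℝ) (hf : Integrable f) (hf0 : ∀ x, 0 ≤ f x)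
    {ε : ℝ} (hε : 0 < ε) :
    ∫⁻ x, ENNReal.ofReal ((f x + ε) * (Real.log (f x + ε) - Real.log ε) - f x)
      = ∫⁻ s in Ioi (0:ℝ), (∫⁻ x, ENNReal.ofReal (f x - s)) / ENNReal.ofReal (s + ε) := by
  set f' : Rd d → ℝ := fun x => max (hf.1.mk f x) 0 with hf'def
  have hf'meas : Measurable f' := hf.1.measurable_mk.max measurable_const
  have hff' : f =ᵐ[volume] f' := by
    filter_upwards [hf.1.ae_eq_mk] with x hx
    rw [hf'def]
    simp only [← hx]
    exact (max_eq_left (hf0 x)).symm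
  have hf'0 : ∀ x, 0 ≤ f' x := fun x => le_max_right _ _
  have hprod : Measurable (fun p : (Rd d) × ℝ =>
      ENNReal.ofReal (f' p.1 - p.2) / ENNReal.ofReal (p.2 + ε)) :=
    (ENNReal.measurable_ofReal.comp ((hf'meas.comp measurable_fst).sub measurable_snd)).div
      (ENNReal.measurable_ofReal.comp (measurable_snd.add measurable_const))
  calc ∫⁻ x, ENNReal.ofReal ((f x + ε) * (Real.log (f x + ε) - Real.log ε) - f x)
      = ∫⁻ x, ENNReal.ofReal ((f' x + ε) * (Real.log (f' x + ε) - Real.log ε) - f' x) :=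
        lintegral_congr_ae (hff'.mono fun x hx => by dsimp only; rw [hx])
    _ = ∫⁻ x, ∫⁻ s in Ioi (0:ℝ), ENNReal.ofReal (f' x - s) / ENNReal.ofReal (s + ε) :=
        lintegral_congr fun x => (layer_lintegral ε (f' x) hε (hf'0 x)).symm
    _ = ∫⁻ s in Ioi (0:ℝ), ∫⁻ x, ENNReal.ofReal (f' x - s) / ENNReal.ofReal (s + ε) :=
        lintegral_lintegral_swap hprod.aemeasurable
    _ = ∫⁻ s in Ioi (0:ℝ), (∫⁻ x, ENNReal.ofReal (f' x - s)) / ENNReal.ofReal (s + ε) := by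
        refine lintegral_congr fun s => ?_
        simp only [div_eq_mul_inv]
        rw [lintegral_mul_const]
        exact ENNReal.measurable_ofReal.comp (hf'meas.sub measurable_const)
    _ = ∫⁻ s in Ioi (0:ℝ), (∫⁻ x, ENNReal.ofReal (f x - s)) / ENNReal.ofReal (s + ε) := by
        refine lintegral_congr fun s => ?_
        congr 1
        exact lintegral_congr_ae (hff'.mono fun x hx => by dsimp only; rw [hx])

lemma step_eps {d : ℕ} (f g : Rd d → ℝ)
    (hf : Integrable f) (hg : Integrable g)
    (hf0 : ∀ x, 0 ≤ f x) (hg0 : ∀ x, 0 ≤ g x)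
    (hflogf : Integrable (fun x => f x * Real.log (f x)))
    (hglogg : Integrable (fun x => g x * Real.log (g x)))
    (hmass : ∫ x, f x = ∫ x, g x)
    (hC : ∀ α : ℝ, 0 ≤ α → Cfun f α ≤ Cfun g α)
    {ε : ℝ} (hε : 0 < ε) (hε1 : ε ≤ 1) :
    ∫ x, ((f x + ε) * Real.log (f x + ε) - ε * Real.log ε)
      ≤ ∫ x, ((g x + ε) * Real.log (g x + ε) - ε * Real.log ε) := by
  have main : ∫⁻ x, ENNReal.ofReal ((f x + ε) * (Real.log (f x + ε) - Real.log ε) - f x)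
      ≤ ∫⁻ x, ENNReal.ofReal ((g x + ε) * (Real.log (g x + ε) - Real.log ε) - g x) := by
    rw [ton_repr f hf hf0 hε, ton_repr g hg hg0 hε]
    apply lintegral_mono_ae
    refine (ae_restrict_iff' measurableSet_Ioi).2 (ae_of_all _ fun s hs => ?_)
    apply ENNReal.div_le_div_right
    rw [lint_max hf hf0 (le_of_lt hs), lint_max hg hg0 (le_of_lt hs)]
    exact ENNReal.ofReal_le_ofReal (keyA f g hf hg hf0 hg0 hC hs)
  -- integrability of the regularized entropies
  have hFmeas : ∀ (h : Rd d → ℝ), Integrable h →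
      AEStronglyMeasurable (fun x => (h x + ε) * Real.log (h x + ε) - ε * Real.log ε)
        (volume : Measure (Rd d)) := fun h hint =>
    (((Real.continuous_mul_log.comp (continuous_id.add continuous_const)).comp_aestronglyMeasurable
      hint.1).sub aestronglyMeasurable_const)
  have hdom : ∀ (h : Rd d → ℝ), Integrable h → (∀ x, 0 ≤ h x) →
      Integrable (fun x => h x * Real.log (h x)) →
      Integrable (fun x => h x * |Real.log (h x)| + 2 * h x) := by
    intro h hint h0 hlog
    have h1 : Integrable (fun x => h x * |Real.log (h x)|) := by
      refine hlog.abs.congr (ae_of_all _ fun x => ?_)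
      dsimp only
      rw [abs_mul, abs_of_nonneg (h0 x)]
    exact h1.add (hint.const_mul 2)
  have hFf_int : Integrable (fun x => (f x + ε) * Real.log (f x + ε) - ε * Real.log ε) :=
    (hdom f hf hf0 hflogf).mono' (hFmeas f hf)
      (ae_of_all _ fun x => by rw [Real.norm_eq_abs]; exact Feps_abs ε (f x) hε hε1 (hf0 x))
  have hFg_int : Integrable (fun x => (g x + ε) * Real.log (g x + ε) - ε * Real.log ε) :=
    (hdom g hg hg0 hglogg).mono' (hFmeas g hg)
      (ae_of_all _ fun x => by rw [Real.norm_eq_abs]; exact Feps_abs ε (g x) hε hε1 (hg0 x))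
  have hJf_eq : (fun x => (f x + ε) * (Real.log (f x + ε) - Real.log ε) - f x)
      = fun x => ((f x + ε) * Real.log (f x + ε) - ε * Real.log ε) - (1 + Real.log ε) * f x :=
    funext fun x => by ring
  have hJg_eq : (fun x => (g x + ε) * (Real.log (g x + ε) - Real.log ε) - g x)
      = fun x => ((g x + ε) * Real.log (g x + ε) - ε * Real.log ε) - (1 + Real.log ε) * g x :=
    funext fun x => by ring
  have hJf_int : Integrable (fun x => (f x + ε) * (Real.log (f x + ε) - Real.log ε) - f x) := by
    rw [hJf_eq]; exact hFf_int.sub (hf.const_mul _)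
  have hJg_int : Integrable (fun x => (g x + ε) * (Real.log (g x + ε) - Real.log ε) - g x) := by
    rw [hJg_eq]; exact hFg_int.sub (hg.const_mul _)
  have ef : ENNReal.ofReal (∫ x, ((f x + ε) * (Real.log (f x + ε) - Real.log ε) - f x))
      = ∫⁻ x, ENNReal.ofReal ((f x + ε) * (Real.log (f x + ε) - Real.log ε) - f x) :=
    ofReal_integral_eq_lintegral_ofReal hJf_int
      (ae_of_all _ fun x => J_nonneg ε (f x) hε (hf0 x))
  have eg : ENNReal.ofReal (∫ x, ((g x + ε) * (Real.log (g x + ε) - Real.log ε) - g x))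
      = ∫⁻ x, ENNReal.ofReal ((g x + ε) * (Real.log (g x + ε) - Real.log ε) - g x) :=
    ofReal_integral_eq_lintegral_ofReal hJg_int
      (ae_of_all _ fun x => J_nonneg ε (g x) hε (hg0 x))
  have hreal : ∫ x, ((f x + ε) * (Real.log (f x + ε) - Real.log ε) - f x)
      ≤ ∫ x, ((g x + ε) * (Real.log (g x + ε) - Real.log ε) - g x) := by
    rw [← ENNReal.ofReal_le_ofReal_iff
      (integral_nonneg fun x => J_nonneg ε (g x) hε (hg0 x)), ef, eg]
    exact main
  have expf : ∫ x, ((f x + ε) * (Real.log (f x + ε) - Real.log ε) - f x)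
      = (∫ x, ((f x + ε) * Real.log (f x + ε) - ε * Real.log ε))
        - (1 + Real.log ε) * ∫ x, f x := by
    rw [hJf_eq, integral_sub hFf_int (hf.const_mul _), MeasureTheory.integral_const_mul]
  have expg : ∫ x, ((g x + ε) * (Real.log (g x + ε) - Real.log ε) - g x)
      = (∫ x, ((g x + ε) * Real.log (g x + ε) - ε * Real.log ε))
        - (1 + Real.log ε) * ∫ x, g x := by
    rw [hJg_eq, integral_sub hFg_int (hg.const_mul _), MeasureTheory.integral_const_mul]
  rw [expf, expg, hmass] at hreal
  linarith

end Aux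

/-- If `f` is less concentrated than `g` (with equal masses and absolutely integrable
entropy densities), then `f` has larger entropy: `H(f) ≥ H(g)` where
`H(f) = -∫ f log f`. -/
theorem stmt12 {d : ℕ} (f g : Rd d → ℝ)
    (hf : Integrable f) (hg : Integrable g)
    (hf0 : ∀ x, 0 ≤ f x) (hg0 : ∀ x, 0 ≤ g x)
    (hf1 : ∫ x, f x = 1) (hg1 : ∫ x, g x = 1)
    (hflogf : Integrable (fun x => f x * Real.log (f x)))
    (hglogg : Integrable (fun x => g x * Real.log (g x)))
    (hmass : ∫ x, f x = ∫ x, g x)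
    (hC : ∀ α : ℝ, 0 ≤ α → Cfun f α ≤ Cfun g α) :
    -∫ x, g x * Real.log (g x) ≤ -∫ x, f x * Real.log (f x) := by
  have hIneq : ∀ᶠ ε in nhdsWithin (0:ℝ) (Ioi 0),
      (∫ x, ((f x + ε) * Real.log (f x + ε) - ε * Real.log ε))
        ≤ ∫ x, ((g x + ε) * Real.log (g x + ε) - ε * Real.log ε) := by
    filter_upwards [Ioo_mem_nhdsGT_of_mem (left_mem_Ico.2 one_pos)] with ε hε
    exact step_eps f g hf hg hf0 hg0 hflogf hglogg hmass hC hε.1 hε.2.le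
  have hT : ∀ (h : Rd d → ℝ), Integrable h → (∀ x, 0 ≤ h x) →
      Integrable (fun x => h x * Real.log (h x)) →
      Filter.Tendsto (fun ε => ∫ x, ((h x + ε) * Real.log (h x + ε) - ε * Real.log ε))
        (nhdsWithin (0:ℝ) (Ioi 0)) (nhds (∫ x, h x * Real.log (h x))) := by
    intro h hint h0 hlog
    have hdom : Integrable (fun x => h x * |Real.log (h x)| + 2 * h x) := by
      have h1 : Integrable (fun x => h x * |Real.log (h x)|) := by
        refine hlog.abs.congr (ae_of_all _ fun x => ?_)
        dsimp only; rw [abs_mul, abs_of_nonneg (h0 x)]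
      exact h1.add (hint.const_mul 2)
    apply tendsto_integral_filter_of_dominated_convergence
      (fun x => h x * |Real.log (h x)| + 2 * h x)
    · filter_upwards [self_mem_nhdsWithin] with ε _
      exact ((Real.continuous_mul_log.comp
        (continuous_id.add continuous_const)).comp_aestronglyMeasurable hint.1).sub
        aestronglyMeasurable_const
    · filter_upwards [Ioo_mem_nhdsGT_of_mem (left_mem_Ico.2 one_pos)] with ε hε
      exact ae_of_all _ fun x => by
        rw [Real.norm_eq_abs]; exact Feps_abs ε (h x) hε.1 hε.2.le (h0 x)
    · exact hdom
    · refine ae_of_all _ fun x => ?_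
      have hc : ContinuousAt
          (fun ε : ℝ => (h x + ε) * Real.log (h x + ε) - ε * Real.log ε) 0 := by
        apply ContinuousAt.sub
        · exact (Real.continuous_mul_log.comp (continuous_const.add continuous_id)).continuousAt
        · exact Real.continuous_mul_log.continuousAt
      have := hc.tendsto.mono_left (nhdsWithin_le_nhds (s := Ioi (0:ℝ)))
      simpa using this
  have hTf := hT f hf hf0 hflogf
  have hTg := hT g hg hg0 hglogg
  have : ∫ x, f x * Real.log (f x) ≤ ∫ x, g x * Real.log (g x) :=
    le_of_tendsto_of_tendsto hTf hTg hIneq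
  linarith
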